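/- arXiv:1901.06750 — 5 statements merged into one kernel-verified Lean document; each statement's English description precedes it below -/
import Mathlib

section
/- Let Θ, Π ⊂ ℝ^p be compact. Let Ψ_n⁰ and Ψ_nˢ : Ω × Θ × Π → ℝ^p be two sequences of random estimating functions (observed and simulated pivot respectively), both satisfying: stochastic Lipschitz continuity in π with tight constants A_n = O_p(1), stochastic Lipschitz continuity in θ with tight constants B_n = O_p(1), and pointwise convergence in probability to the same deterministic limit Ψ(θ, π). Assume identifiability: for every θ, Ψ(θ, π₁) = Ψ(θ, π₂) iff π₁ = π₂; for every π, Ψ(θ₁, π) = Ψ(θ₂, π) iff θ₁ = θ₂; and Ψ(θ₀, π₀) = 0 for some (θ₀, π₀) ∈ Θ × Π. Let π̂_n be near-zeros of π ↦ Ψ_n⁰(θ₀, π) (‖Ψ_n⁰(θ₀, π̂_n)‖ ≤ inf_π ‖Ψ_n⁰(θ₀, π)‖ + o_p(1)) and let θ̂_n be near-zeros of θ ↦ Ψ_nˢ(θ, π̂_n). Then θ̂_n converges in probability to θ₀. -/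
open MeasureTheory Filter Topology
open scoped ENNReal

/-!
STATEMENT 8 (Consistency of the SwiZs estimator, Theorem `ch2:thm:con` part 2).

`Θ, Π ⊂ ℝ^p` compact.  Two sequences of random estimating functions `Ψ⁰ n` (observed
pivot) and `Ψˢ n` (simulated pivot) on `Ω × Θ × Π` satisfy: stochastic Lipschitz
continuity in `π` with tight constants `A n = O_p(1)` and in `θ` with tight constants
`B n = O_p(1)`, and pointwise convergence in probability to a common deterministic
limit `Ψ∞`.  Identifiability: `Ψ∞ θ ·` injective on `Π` for every `θ`, `Ψ∞ · π`
injective on `Θ` for every `π`, and `Ψ∞ θ₀ π₀ = 0`.  If `π̂ n` are near-zeros of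
`π ↦ Ψ⁰ n θ₀ π` and `θ̂ n` are near-zeros of `θ ↦ Ψˢ n θ (π̂ n)`, then `θ̂ n → θ₀`
in probability.
-/

/-- `O_p(1)` (tightness). -/
def BigOp {Ω : Type*} [MeasurableSpace Ω] (P : Measure Ω) (A : ℕ → Ω → ℝ) : Prop :=
  ∀ ε : ℝ, 0 < ε → ∃ M : ℝ, 0 < M ∧ ∀ᶠ n in atTop, P {ω | M < |A n ω|} < ENNReal.ofReal ε

/-- Convergence in probability. -/
def TendstoInProb {Ω E : Type*} [MeasurableSpace Ω] [PseudoMetricSpace E]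
    (P : Measure Ω) (X : ℕ → Ω → E) (c : E) : Prop :=
  ∀ ε : ℝ, 0 < ε → Tendsto (fun n => P {ω | ε < dist (X n ω) c}) atTop (nhds 0)

namespace SwizsAux

lemma tendsto_zero_of_forall_ofReal {f : ℕ → ℝ≥0∞}
    (h : ∀ η : ℝ, 0 < η → ∀ᶠ n in atTop, f n ≤ ENNReal.ofReal η) :
    Tendsto f atTop (nhds 0) := by
  rw [ENNReal.tendsto_nhds_zero]
  intro ε hε
  have hne : min ε 1 ≠ 0 := ne_of_gt (lt_min hε zero_lt_one)
  have hnt : min ε 1 ≠ ⊤ := ne_top_of_le_ne_top ENNReal.one_ne_top (min_le_right _ _)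
  have h1 : (0:ℝ) < (min ε 1).toReal := ENNReal.toReal_pos hne hnt
  filter_upwards [h _ h1] with n hn
  refine hn.trans ?_
  rw [ENNReal.ofReal_toReal hnt]
  exact min_le_left _ _

variable {Ω : Type*} [MeasurableSpace Ω] (P : Measure Ω) [IsProbabilityMeasure P]

lemma exists_notMem₃ (S1 S2 S3 : Set Ω) (h : P S1 + P S2 + P S3 < 1) :
    ∃ ω, ω ∉ S1 ∧ ω ∉ S2 ∧ ω ∉ S3 := by
  by_contra hc
  have cover : (Set.univ : Set Ω) ⊆ S1 ∪ S2 ∪ S3 := by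
    intro ω _
    by_contra hmem
    simp only [Set.mem_union, not_or] at hmem
    exact hc ⟨ω, hmem.1.1, hmem.1.2, hmem.2⟩
  have h1 : (1 : ℝ≥0∞) ≤ P (S1 ∪ S2 ∪ S3) := by
    calc (1 : ℝ≥0∞) = P Set.univ := measure_univ.symm
      _ ≤ P (S1 ∪ S2 ∪ S3) := measure_mono cover
  have hle : P (S1 ∪ S2 ∪ S3) ≤ P S1 + P S2 + P S3 :=
    le_trans (measure_union_le _ _) (add_le_add (measure_union_le _ _) le_rfl)
  exact absurd (h1.trans hle) (not_le.mpr h)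

lemma norm_sub_limit_le {E : Type*} [NormedAddCommGroup E]
    (f g : ℕ → Ω → E) (c d : E) (M r : ℝ)
    (hf : TendstoInProb P f c) (hg : TendstoInProb P g d)
    (hb : ∀ᶠ n in atTop, P {ω | M * r < ‖f n ω - g n ω‖} ≤ ENNReal.ofReal (1/4)) :
    ‖c - d‖ ≤ M * r := by
  by_contra hlt
  push_neg at hlt
  set δ := (‖c - d‖ - M * r) / 3 with hδdef
  have hδpos : 0 < δ := by unfold δ; linarith
  have hq : (0:ℝ≥0∞) < ENNReal.ofReal (1/4) := ENNReal.ofReal_pos.mpr (by norm_num)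
  have e1 : ∀ᶠ n in atTop, P {ω | δ < dist (f n ω) c} < ENNReal.ofReal (1/4) :=
    (hf δ hδpos).eventually_lt_const hq
  have e2 : ∀ᶠ n in atTop, P {ω | δ < dist (g n ω) d} < ENNReal.ofReal (1/4) :=
    (hg δ hδpos).eventually_lt_const hq
  obtain ⟨n, hbn, he1, he2⟩ := (hb.and (e1.and e2)).exists
  have hsum : P {ω | M * r < ‖f n ω - g n ω‖} + P {ω | δ < dist (f n ω) c}
      + P {ω | δ < dist (g n ω) d} < 1 := by
    have heq : ENNReal.ofReal (1/4) + ENNReal.ofReal (1/4) + ENNReal.ofReal (1/4)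
        = ENNReal.ofReal (3/4) := by
      rw [← ENNReal.ofReal_add (by norm_num) (by norm_num),
        ← ENNReal.ofReal_add (by norm_num) (by norm_num)]
      norm_num
    have h1 : P {ω | M * r < ‖f n ω - g n ω‖} + P {ω | δ < dist (f n ω) c}
        < ENNReal.ofReal (1/4) + ENNReal.ofReal (1/4) :=
      ENNReal.add_lt_add_of_le_of_lt (measure_ne_top P _) hbn he1
    calc P {ω | M * r < ‖f n ω - g n ω‖} + P {ω | δ < dist (f n ω) c}
        + P {ω | δ < dist (g n ω) d}
        < ENNReal.ofReal (1/4) + ENNReal.ofReal (1/4) + ENNReal.ofReal (1/4) :=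
          ENNReal.add_lt_add h1 he2
      _ = ENNReal.ofReal (3/4) := heq
      _ < 1 := ENNReal.ofReal_lt_one.mpr (by norm_num)
  obtain ⟨ω, hω1, hω2, hω3⟩ := exists_notMem₃ P _ _ _ hsum
  simp only [Set.mem_setOf_eq, not_lt] at hω1 hω2 hω3
  have key : ‖c - d‖ ≤ δ + M * r + δ := by
    have hdecomp : c - d = (c - f n ω) + (f n ω - g n ω) + (g n ω - d) := by abel
    rw [hdecomp]
    refine (norm_add₃_le).trans ?_
    have h1 : ‖c - f n ω‖ ≤ δ := by rw [← dist_eq_norm, dist_comm]; exact hω2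
    have h3 : ‖g n ω - d‖ ≤ δ := by rw [← dist_eq_norm]; exact hω3
    linarith
  unfold δ at key
  linarith

lemma biInf_le_of_mem {α : Type*} {f : α → ℝ} (hf : ∀ x, 0 ≤ f x) {s : Set α} {a : α}
    (ha : a ∈ s) : (⨅ x ∈ s, f x) ≤ f a := by
  have hbdd : BddBelow (Set.range fun x => ⨅ _ : x ∈ s, f x) := by
    refine ⟨0, ?_⟩
    rintro r ⟨x, rfl⟩
    exact Real.iInf_nonneg fun _ => hf x
  refine (ciInf_le hbdd a).trans ?_
  exact ciInf_le ⟨0, by rintro r ⟨h, rfl⟩; exact hf a⟩ ha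

lemma continuousOn_of_lip {X E : Type*} [PseudoMetricSpace X] [NormedAddCommGroup E]
    {s : Set X} {f : X → E} (L : ℝ)
    (h : ∀ x ∈ s, ∀ y ∈ s, ‖f x - f y‖ ≤ L * dist x y) : ContinuousOn f s := by
  refine (LipschitzOnWith.of_dist_le_mul (K := Real.toNNReal L) ?_).continuousOn
  intro x hx y hy
  rw [dist_eq_norm]
  refine (h x hx y hy).trans ?_
  exact mul_le_mul_of_nonneg_right (Real.le_coe_toNNReal L) dist_nonneg

lemma exists_pos_lowerBound {X : Type*} [MetricSpace X] {E : Type*} [NormedAddCommGroup E]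
    (K : Set X) (hK : IsCompact K) (f : X → E) (hf : ContinuousOn f K)
    (x₀ : X) (hx₀ : ∀ x ∈ K, f x = 0 → x = x₀) {ε : ℝ} (hε : 0 < ε) :
    ∃ c > 0, ∀ x ∈ K, ε ≤ dist x x₀ → c ≤ ‖f x‖ := by
  set S := K ∩ {x | ε ≤ dist x x₀} with hS
  have hclosed : IsClosed {x : X | ε ≤ dist x x₀} :=
    isClosed_le continuous_const ((continuous_id.dist continuous_const))
  have hScomp : IsCompact S := hK.inter_right hclosed
  rcases Set.eq_empty_or_nonempty S with hSe | hSne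
  · refine ⟨1, one_pos, fun x hx hdx => ?_⟩
    have hxS : x ∈ S := ⟨hx, hdx⟩
    rw [hSe] at hxS
    exact absurd hxS (Set.notMem_empty x)
  · obtain ⟨z, hzS, hzmin⟩ := hScomp.exists_isMinOn hSne
      ((continuous_norm.comp_continuousOn (hf.mono Set.inter_subset_left)))
    refine ⟨‖f z‖, ?_, fun x hx hdx => hzmin (⟨hx, hdx⟩ : x ∈ S)⟩
    show (0:ℝ) < ‖f z‖
    rw [norm_pos_iff]
    intro hfz
    have : z = x₀ := hx₀ z hzS.1 hfz
    have hd : ε ≤ dist z x₀ := hzS.2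
    rw [this, dist_self] at hd
    linarith

end SwizsAux

namespace SwizsAux

variable {Ω : Type*} [MeasurableSpace Ω] (P : Measure Ω) [IsProbabilityMeasure P]

lemma unif_conv {X : Type*} [PseudoMetricSpace X] {E : Type*} [NormedAddCommGroup E]
    (K : Set X) (hK : IsCompact K)
    (F : ℕ → Ω → X → E) (G : X → E) (C : ℕ → Ω → ℝ) (hC : BigOp P C)
    (hLip : ∀ᶠ n in atTop, ∀ ω, ∀ x ∈ K, ∀ y ∈ K, ‖F n ω x - F n ω y‖ ≤ C n ω * dist x y)
    (L : ℝ) (hL : 0 ≤ L) (hGL : ∀ x ∈ K, ∀ y ∈ K, ‖G x - G y‖ ≤ L * dist x y)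
    (hpt : ∀ x ∈ K, TendstoInProb P (fun n ω => F n ω x) (G x))
    (ε η : ℝ) (hε : 0 < ε) (hη : 0 < η) :
    ∀ᶠ n in atTop, P {ω | ∃ x ∈ K, ε < ‖F n ω x - G x‖} ≤ ENNReal.ofReal η := by
  obtain ⟨M, hM, hMev⟩ := hC (η/2) (by positivity)
  set δ := ε / (2 * (M + L + 1)) with hδdef
  have hδ : 0 < δ := by positivity
  have hcover : K ⊆ ⋃ y ∈ K, Metric.ball y δ := by
    intro x hx
    exact Set.mem_biUnion hx (Metric.mem_ball_self hδ)
  obtain ⟨t, htK, htfin, hcov⟩ :=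
    hK.elim_finite_subcover_image (fun y _ => Metric.isOpen_ball) hcover
  classical
  set s := htfin.toFinset with hsdef
  have hmem_s : ∀ y, y ∈ s ↔ y ∈ t := fun y => htfin.mem_toFinset
  set q := η / (2 * (s.card + 1)) with hqdef
  have hq : 0 < q := by positivity
  have hnet : ∀ᶠ n in atTop, ∀ y ∈ s, P {ω | ε/2 < dist (F n ω y) (G y)} ≤ ENNReal.ofReal q := by
    rw [eventually_all_finset]
    intro y hy
    have hyK : y ∈ K := htK ((hmem_s y).mp hy)
    exact ((hpt y hyK (ε/2) (by positivity)).eventually_lt_const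
      (ENNReal.ofReal_pos.mpr hq)).mono fun n hn => hn.le
  filter_upwards [hMev, hLip, hnet] with n hMn hLipn hnetn
  have hsub : {ω | ∃ x ∈ K, ε < ‖F n ω x - G x‖} ⊆
      {ω | M < |C n ω|} ∪ ⋃ y ∈ s, {ω | ε/2 < dist (F n ω y) (G y)} := by
    intro ω hω
    obtain ⟨x, hxK, hxdev⟩ := hω
    by_contra hnot
    simp only [Set.mem_union, Set.mem_setOf_eq, Set.mem_iUnion, not_or, not_exists, not_lt] at hnot
    obtain ⟨hCω, hdev⟩ := hnot
    obtain ⟨y, hyt, hxy⟩ := Set.mem_iUnion₂.mp (hcov hxK)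
    have hys : y ∈ s := (hmem_s y).mpr hyt
    have hyK : y ∈ K := htK hyt
    have hdxy : dist x y < δ := Metric.mem_ball.mp hxy
    have h1 : ‖F n ω x - F n ω y‖ ≤ M * δ := by
      refine (hLipn ω x hxK y hyK).trans ?_
      have : C n ω * dist x y ≤ M * dist x y :=
        mul_le_mul_of_nonneg_right ((le_abs_self _).trans hCω) dist_nonneg
      refine this.trans ?_
      exact mul_le_mul_of_nonneg_left hdxy.le hM.le
    have h2 : ‖F n ω y - G y‖ ≤ ε/2 := by
      rw [← dist_eq_norm]
      exact hdev y hys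
    have h3 : ‖G y - G x‖ ≤ L * δ := by
      refine (hGL y hyK x hxK).trans ?_
      rw [dist_comm]
      exact mul_le_mul_of_nonneg_left hdxy.le hL
    have hdecomp : F n ω x - G x = (F n ω x - F n ω y) + (F n ω y - G y) + (G y - G x) := by
      abel
    have hbound : ‖F n ω x - G x‖ ≤ M * δ + ε/2 + L * δ := by
      rw [hdecomp]
      refine norm_add₃_le.trans ?_
      linarith
    have hδeq : (M + L + 1) * δ = ε / 2 := by
      rw [hδdef]
      field_simp
    have : ‖F n ω x - G x‖ ≤ ε := by
      have hδle : M * δ + L * δ ≤ (M + L + 1) * δ := by nlinarith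
      linarith [hδeq ▸ hδle]
    linarith
  refine (measure_mono hsub).trans ?_
  refine (measure_union_le _ _).trans ?_
  have hsum : P (⋃ y ∈ s, {ω | ε/2 < dist (F n ω y) (G y)}) ≤ ENNReal.ofReal (η/2) := by
    refine (measure_biUnion_finset_le s _).trans ?_
    refine (Finset.sum_le_card_nsmul s _ (ENNReal.ofReal q) fun y hy => hnetn y hy).trans ?_
    rw [nsmul_eq_mul, ← ENNReal.ofReal_natCast, ← ENNReal.ofReal_mul (by positivity)]
    refine ENNReal.ofReal_le_ofReal ?_
    have hkey : ((s.card:ℝ)+1) * q = η/2 := by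
      rw [hqdef]
      field_simp
    calc (s.card:ℝ) * q ≤ ((s.card:ℝ)+1) * q :=
          mul_le_mul_of_nonneg_right (by linarith) hq.le
      _ = η/2 := hkey
  calc P {ω | M < |C n ω|} + P (⋃ y ∈ s, {ω | ε/2 < dist (F n ω y) (G y)})
      ≤ ENNReal.ofReal (η/2) + ENNReal.ofReal (η/2) := add_le_add hMn.le hsum
    _ = ENNReal.ofReal η := by
        rw [← ENNReal.ofReal_add (by positivity) (by positivity)]
        norm_num

end SwizsAux

namespace SwizsAux

lemma prod_lip {E₁ E₂ F : Type*} [NormedAddCommGroup E₁] [NormedAddCommGroup E₂]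
    [NormedAddCommGroup F] {Θ : Set E₁} {Pi : Set E₂} {f : E₁ → E₂ → F} {a b : ℝ}
    (hπ : ∀ θ ∈ Θ, ∀ π₁ ∈ Pi, ∀ π₂ ∈ Pi, ‖f θ π₁ - f θ π₂‖ ≤ a * ‖π₁ - π₂‖)
    (hθ : ∀ θ₁ ∈ Θ, ∀ θ₂ ∈ Θ, ∀ π ∈ Pi, ‖f θ₁ π - f θ₂ π‖ ≤ b * ‖θ₁ - θ₂‖)
    (ha : 0 ≤ a) (hb : 0 ≤ b) :
    ∀ x ∈ Θ ×ˢ Pi, ∀ y ∈ Θ ×ˢ Pi, ‖f x.1 x.2 - f y.1 y.2‖ ≤ (a + b) * dist x y := by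
  intro x hx y hy
  have h1 := hπ x.1 hx.1 x.2 hx.2 y.2 hy.2
  have h2 := hθ x.1 hx.1 y.1 hy.1 y.2 hy.2
  have hd1 : ‖x.1 - y.1‖ ≤ dist x y := by
    rw [← dist_eq_norm, Prod.dist_eq]; exact le_sup_left
  have hd2 : ‖x.2 - y.2‖ ≤ dist x y := by
    rw [← dist_eq_norm, Prod.dist_eq]; exact le_sup_right
  have hdecomp : f x.1 x.2 - f y.1 y.2
      = (f x.1 x.2 - f x.1 y.2) + (f x.1 y.2 - f y.1 y.2) := by abel
  rw [hdecomp]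
  refine (norm_add_le _ _).trans ?_
  have e1 : ‖f x.1 x.2 - f x.1 y.2‖ ≤ a * dist x y :=
    h1.trans (mul_le_mul_of_nonneg_left hd2 ha)
  have e2 : ‖f x.1 y.2 - f y.1 y.2‖ ≤ b * dist x y :=
    h2.trans (mul_le_mul_of_nonneg_left hd1 hb)
  rw [add_mul]
  linarith

end SwizsAux


set_option maxHeartbeats 2000000 in
theorem swizs_consistency
    {Ω : Type*} [MeasurableSpace Ω] (P : Measure Ω) [IsProbabilityMeasure P] {p : ℕ}
    (Θ Pi : Set (EuclideanSpace ℝ (Fin p))) (hΘ : IsCompact Θ) (hPi : IsCompact Pi)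
    (Ψ0 Ψs : ℕ → Ω → EuclideanSpace ℝ (Fin p) → EuclideanSpace ℝ (Fin p) →
      EuclideanSpace ℝ (Fin p))
    (Ψlim : EuclideanSpace ℝ (Fin p) → EuclideanSpace ℝ (Fin p) → EuclideanSpace ℝ (Fin p))
    (A0 As B0 Bs : ℕ → Ω → ℝ)
    (hA0 : BigOp P A0) (hAs : BigOp P As) (hB0 : BigOp P B0) (hBs : BigOp P Bs)
    -- stochastic Lipschitz continuity in π
    (hLipπ0 : ∀ᶠ n in atTop, ∀ ω, ∀ θ ∈ Θ, ∀ π₁ ∈ Pi, ∀ π₂ ∈ Pi,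
      ‖Ψ0 n ω θ π₁ - Ψ0 n ω θ π₂‖ ≤ A0 n ω * ‖π₁ - π₂‖)
    (hLipπs : ∀ᶠ n in atTop, ∀ ω, ∀ θ ∈ Θ, ∀ π₁ ∈ Pi, ∀ π₂ ∈ Pi,
      ‖Ψs n ω θ π₁ - Ψs n ω θ π₂‖ ≤ As n ω * ‖π₁ - π₂‖)
    -- stochastic Lipschitz continuity in θ
    (hLipθ0 : ∀ᶠ n in atTop, ∀ ω, ∀ θ₁ ∈ Θ, ∀ θ₂ ∈ Θ, ∀ π ∈ Pi,
      ‖Ψ0 n ω θ₁ π - Ψ0 n ω θ₂ π‖ ≤ B0 n ω * ‖θ₁ - θ₂‖)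
    (hLipθs : ∀ᶠ n in atTop, ∀ ω, ∀ θ₁ ∈ Θ, ∀ θ₂ ∈ Θ, ∀ π ∈ Pi,
      ‖Ψs n ω θ₁ π - Ψs n ω θ₂ π‖ ≤ Bs n ω * ‖θ₁ - θ₂‖)
    -- pointwise convergence in probability to the common limit
    (hpt0 : ∀ θ ∈ Θ, ∀ π ∈ Pi, TendstoInProb P (fun n ω => Ψ0 n ω θ π) (Ψlim θ π))
    (hpts : ∀ θ ∈ Θ, ∀ π ∈ Pi, TendstoInProb P (fun n ω => Ψs n ω θ π) (Ψlim θ π))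
    -- identifiability
    (hinjπ : ∀ θ ∈ Θ, ∀ π₁ ∈ Pi, ∀ π₂ ∈ Pi, Ψlim θ π₁ = Ψlim θ π₂ ↔ π₁ = π₂)
    (hinjθ : ∀ π ∈ Pi, ∀ θ₁ ∈ Θ, ∀ θ₂ ∈ Θ, Ψlim θ₁ π = Ψlim θ₂ π ↔ θ₁ = θ₂)
    (θ₀ π₀ : EuclideanSpace ℝ (Fin p)) (hθ₀ : θ₀ ∈ Θ) (hπ₀ : π₀ ∈ Pi)
    (hzero : Ψlim θ₀ π₀ = 0)
    -- auxiliary near-zeros and SwiZs near-zeros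
    (πhat : ℕ → Ω → EuclideanSpace ℝ (Fin p)) (hπmem : ∀ n ω, πhat n ω ∈ Pi)
    (errπ : ℕ → Ω → ℝ) (herrπ : TendstoInProb P errπ 0)
    (hπnear : ∀ n ω, ‖Ψ0 n ω θ₀ (πhat n ω)‖ ≤ (sInf ((fun π => ‖Ψ0 n ω θ₀ π‖) '' Pi)) + errπ n ω)
    (θhat : ℕ → Ω → EuclideanSpace ℝ (Fin p)) (hθmem : ∀ n ω, θhat n ω ∈ Θ)
    (errθ : ℕ → Ω → ℝ) (herrθ : TendstoInProb P errθ 0)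
    (hθnear : ∀ n ω, ‖Ψs n ω (θhat n ω) (πhat n ω)‖ ≤
      (sInf ((fun θ => ‖Ψs n ω θ (πhat n ω)‖) '' Θ)) + errθ n ω) :
    TendstoInProb P θhat θ₀ := by
  classical
  -- Lipschitz constants for the limit function
  obtain ⟨Ma, hMa, hMaev⟩ := hA0 (1/4) (by norm_num)
  obtain ⟨Mb, hMb, hMbev⟩ := hB0 (1/4) (by norm_num)
  have hMaev' : ∀ᶠ n in atTop, P {ω | Ma < |A0 n ω|} ≤ ENNReal.ofReal (1/4) :=
    hMaev.mono fun n h => h.le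
  have hMbev' : ∀ᶠ n in atTop, P {ω | Mb < |B0 n ω|} ≤ ENNReal.ofReal (1/4) :=
    hMbev.mono fun n h => h.le
  have hΨπ : ∀ θ ∈ Θ, ∀ π₁ ∈ Pi, ∀ π₂ ∈ Pi, ‖Ψlim θ π₁ - Ψlim θ π₂‖ ≤ Ma * ‖π₁ - π₂‖ := by
    intro θ hθ π₁ h1 π₂ h2
    rcases eq_or_ne π₁ π₂ with rfl | hne
    · simp
    · have hr : 0 < ‖π₁ - π₂‖ := by rw [norm_pos_iff]; exact sub_ne_zero.mpr hne
      refine SwizsAux.norm_sub_limit_le P (fun n ω => Ψ0 n ω θ π₁) (fun n ω => Ψ0 n ω θ π₂)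
        _ _ _ _ (hpt0 θ hθ π₁ h1) (hpt0 θ hθ π₂ h2) ?_
      filter_upwards [hMaev', hLipπ0] with n hMn hLipn
      refine le_trans (measure_mono ?_) hMn
      intro ω hω
      simp only [Set.mem_setOf_eq] at hω ⊢
      have hle : ‖Ψ0 n ω θ π₁ - Ψ0 n ω θ π₂‖ ≤ |A0 n ω| * ‖π₁ - π₂‖ :=
        (hLipn ω θ hθ π₁ h1 π₂ h2).trans
          (mul_le_mul_of_nonneg_right (le_abs_self _) (norm_nonneg _))
      exact lt_of_mul_lt_mul_right (lt_of_lt_of_le hω hle) hr.le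
  have hΨθ : ∀ θ₁ ∈ Θ, ∀ θ₂ ∈ Θ, ∀ π ∈ Pi, ‖Ψlim θ₁ π - Ψlim θ₂ π‖ ≤ Mb * ‖θ₁ - θ₂‖ := by
    intro θ₁ h1 θ₂ h2 π hπ
    rcases eq_or_ne θ₁ θ₂ with rfl | hne
    · simp
    · have hr : 0 < ‖θ₁ - θ₂‖ := by rw [norm_pos_iff]; exact sub_ne_zero.mpr hne
      refine SwizsAux.norm_sub_limit_le P (fun n ω => Ψ0 n ω θ₁ π) (fun n ω => Ψ0 n ω θ₂ π)
        _ _ _ _ (hpt0 θ₁ h1 π hπ) (hpt0 θ₂ h2 π hπ) ?_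
      filter_upwards [hMbev', hLipθ0] with n hMn hLipn
      refine le_trans (measure_mono ?_) hMn
      intro ω hω
      simp only [Set.mem_setOf_eq] at hω ⊢
      have hle : ‖Ψ0 n ω θ₁ π - Ψ0 n ω θ₂ π‖ ≤ |B0 n ω| * ‖θ₁ - θ₂‖ :=
        (hLipn ω θ₁ h1 θ₂ h2 π hπ).trans
          (mul_le_mul_of_nonneg_right (le_abs_self _) (norm_nonneg _))
      exact lt_of_mul_lt_mul_right (lt_of_lt_of_le hω hle) hr.le
  -- the compact product set
  set K : Set (EuclideanSpace ℝ (Fin p) × EuclideanSpace ℝ (Fin p)) := Θ ×ˢ Pi with hKdef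
  have hKc : IsCompact K := hΘ.prod hPi
  have hGlip : ∀ x ∈ K, ∀ y ∈ K,
      ‖Ψlim x.1 x.2 - Ψlim y.1 y.2‖ ≤ (Ma + Mb) * dist x y :=
    SwizsAux.prod_lip hΨπ hΨθ hMa.le hMb.le
  -- tightness of the combined Lipschitz constants
  have hC0 : BigOp P (fun n ω => |A0 n ω| + |B0 n ω|) := by
    intro ε hε
    obtain ⟨Na, hNa, ha⟩ := hA0 (ε/2) (by positivity)
    obtain ⟨Nb, hNb, hb⟩ := hB0 (ε/2) (by positivity)
    refine ⟨Na + Nb, by positivity, ?_⟩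
    filter_upwards [ha, hb] with n han hbn
    have hsub : {ω | Na + Nb < |(|A0 n ω| + |B0 n ω|)|}
        ⊆ {ω | Na < |A0 n ω|} ∪ {ω | Nb < |B0 n ω|} := by
      intro ω hω
      simp only [Set.mem_setOf_eq] at hω
      by_contra hc
      simp only [Set.mem_union, Set.mem_setOf_eq, not_or, not_lt] at hc
      have habs : |(|A0 n ω| + |B0 n ω|)| = |A0 n ω| + |B0 n ω| :=
        abs_of_nonneg (by positivity)
      rw [habs] at hω
      linarith [hc.1, hc.2]
    calc P {ω | Na + Nb < |(|A0 n ω| + |B0 n ω|)|}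
        ≤ P ({ω | Na < |A0 n ω|} ∪ {ω | Nb < |B0 n ω|}) := measure_mono hsub
      _ ≤ P {ω | Na < |A0 n ω|} + P {ω | Nb < |B0 n ω|} := measure_union_le _ _
      _ < ENNReal.ofReal (ε/2) + ENNReal.ofReal (ε/2) := ENNReal.add_lt_add han hbn
      _ = ENNReal.ofReal ε := by
          rw [← ENNReal.ofReal_add (by positivity) (by positivity)]; norm_num
  have hCs : BigOp P (fun n ω => |As n ω| + |Bs n ω|) := by
    intro ε hε
    obtain ⟨Na, hNa, ha⟩ := hAs (ε/2) (by positivity)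
    obtain ⟨Nb, hNb, hb⟩ := hBs (ε/2) (by positivity)
    refine ⟨Na + Nb, by positivity, ?_⟩
    filter_upwards [ha, hb] with n han hbn
    have hsub : {ω | Na + Nb < |(|As n ω| + |Bs n ω|)|}
        ⊆ {ω | Na < |As n ω|} ∪ {ω | Nb < |Bs n ω|} := by
      intro ω hω
      simp only [Set.mem_setOf_eq] at hω
      by_contra hc
      simp only [Set.mem_union, Set.mem_setOf_eq, not_or, not_lt] at hc
      have habs : |(|As n ω| + |Bs n ω|)| = |As n ω| + |Bs n ω| :=
        abs_of_nonneg (by positivity)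
      rw [habs] at hω
      linarith [hc.1, hc.2]
    calc P {ω | Na + Nb < |(|As n ω| + |Bs n ω|)|}
        ≤ P ({ω | Na < |As n ω|} ∪ {ω | Nb < |Bs n ω|}) := measure_mono hsub
      _ ≤ P {ω | Na < |As n ω|} + P {ω | Nb < |Bs n ω|} := measure_union_le _ _
      _ < ENNReal.ofReal (ε/2) + ENNReal.ofReal (ε/2) := ENNReal.add_lt_add han hbn
      _ = ENNReal.ofReal ε := by
          rw [← ENNReal.ofReal_add (by positivity) (by positivity)]; norm_num
  -- Lipschitz on K for the random functions
  have hLipK0 : ∀ᶠ n in atTop, ∀ ω, ∀ x ∈ K, ∀ y ∈ K,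
      ‖Ψ0 n ω x.1 x.2 - Ψ0 n ω y.1 y.2‖ ≤ (|A0 n ω| + |B0 n ω|) * dist x y := by
    filter_upwards [hLipπ0, hLipθ0] with n h1 h2
    intro ω
    exact SwizsAux.prod_lip
      (fun θ hθ π₁ hπ1 π₂ hπ2 => (h1 ω θ hθ π₁ hπ1 π₂ hπ2).trans
        (mul_le_mul_of_nonneg_right (le_abs_self _) (norm_nonneg _)))
      (fun θ₁ ha θ₂ hb π hπ => (h2 ω θ₁ ha θ₂ hb π hπ).trans
        (mul_le_mul_of_nonneg_right (le_abs_self _) (norm_nonneg _)))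
      (abs_nonneg _) (abs_nonneg _)
  have hLipKs : ∀ᶠ n in atTop, ∀ ω, ∀ x ∈ K, ∀ y ∈ K,
      ‖Ψs n ω x.1 x.2 - Ψs n ω y.1 y.2‖ ≤ (|As n ω| + |Bs n ω|) * dist x y := by
    filter_upwards [hLipπs, hLipθs] with n h1 h2
    intro ω
    exact SwizsAux.prod_lip
      (fun θ hθ π₁ hπ1 π₂ hπ2 => (h1 ω θ hθ π₁ hπ1 π₂ hπ2).trans
        (mul_le_mul_of_nonneg_right (le_abs_self _) (norm_nonneg _)))
      (fun θ₁ ha θ₂ hb π hπ => (h2 ω θ₁ ha θ₂ hb π hπ).trans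
        (mul_le_mul_of_nonneg_right (le_abs_self _) (norm_nonneg _)))
      (abs_nonneg _) (abs_nonneg _)
  -- uniform convergence in probability on K
  have hunif0 : ∀ ε > (0:ℝ), ∀ η > (0:ℝ), ∀ᶠ n in atTop,
      P {ω | ∃ x ∈ K, ε < ‖Ψ0 n ω x.1 x.2 - Ψlim x.1 x.2‖} ≤ ENNReal.ofReal η :=
    fun ε hε η hη => SwizsAux.unif_conv P K hKc (fun n ω x => Ψ0 n ω x.1 x.2)
      (fun x => Ψlim x.1 x.2) _ hC0 hLipK0 (Ma + Mb) (by positivity) hGlip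
      (fun x hx => hpt0 x.1 hx.1 x.2 hx.2) ε η hε hη
  have hunifs : ∀ ε > (0:ℝ), ∀ η > (0:ℝ), ∀ᶠ n in atTop,
      P {ω | ∃ x ∈ K, ε < ‖Ψs n ω x.1 x.2 - Ψlim x.1 x.2‖} ≤ ENNReal.ofReal η :=
    fun ε hε η hη => SwizsAux.unif_conv P K hKc (fun n ω x => Ψs n ω x.1 x.2)
      (fun x => Ψlim x.1 x.2) _ hCs hLipKs (Ma + Mb) (by positivity) hGlip
      (fun x hx => hpts x.1 hx.1 x.2 hx.2) ε η hε hη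
  -- consistency of the auxiliary estimator πhat
  have hcontπ : ContinuousOn (Ψlim θ₀) Pi :=
    SwizsAux.continuousOn_of_lip Ma (fun x hx y hy => by
      rw [dist_eq_norm]; exact hΨπ θ₀ hθ₀ x hx y hy)
  have hidπ : ∀ π ∈ Pi, Ψlim θ₀ π = 0 → π = π₀ := fun π hπ h =>
    (hinjπ θ₀ hθ₀ π hπ π₀ hπ₀).mp (by rw [h, hzero])
  have hπcons : ∀ ε' > (0:ℝ), ∀ η > (0:ℝ), ∀ᶠ n in atTop,
      P {ω | ε' ≤ dist (πhat n ω) π₀} ≤ ENNReal.ofReal η := by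
    intro ε' hε' η hη
    obtain ⟨c, hc, hcmin⟩ := SwizsAux.exists_pos_lowerBound Pi hPi (Ψlim θ₀) hcontπ π₀ hidπ hε'
    have hU := hunif0 (c/4) (by positivity) (η/2) (by positivity)
    have hE : ∀ᶠ n in atTop, P {ω | c/4 < dist (errπ n ω) 0} ≤ ENNReal.ofReal (η/2) :=
      ((herrπ (c/4) (by positivity)).eventually_lt_const
        (ENNReal.ofReal_pos.mpr (by positivity))).mono fun n h => h.le
    filter_upwards [hU, hE] with n hUn hEn
    have hsub : {ω | ε' ≤ dist (πhat n ω) π₀} ⊆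
        {ω | ∃ x ∈ K, c/4 < ‖Ψ0 n ω x.1 x.2 - Ψlim x.1 x.2‖}
          ∪ {ω | c/4 < dist (errπ n ω) 0} := by
      intro ω hω
      simp only [Set.mem_setOf_eq] at hω
      by_cases hA : ω ∈ {ω | ∃ x ∈ K, c/4 < ‖Ψ0 n ω x.1 x.2 - Ψlim x.1 x.2‖}
      · exact Or.inl hA
      by_cases hB : ω ∈ {ω | c/4 < dist (errπ n ω) 0}
      · exact Or.inr hB
      exfalso
      simp only [Set.mem_setOf_eq] at hA hB
      push_neg at hA hB
      have hπK : ((θ₀, πhat n ω) : EuclideanSpace ℝ (Fin p) × EuclideanSpace ℝ (Fin p)) ∈ K :=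
        Set.mk_mem_prod hθ₀ (hπmem n ω)
      have hdev1 : ‖Ψ0 n ω θ₀ (πhat n ω) - Ψlim θ₀ (πhat n ω)‖ ≤ c/4 := hA (θ₀, πhat n ω) hπK
      have hdev2 : ‖Ψ0 n ω θ₀ π₀ - Ψlim θ₀ π₀‖ ≤ c/4 :=
        hA (θ₀, π₀) (Set.mk_mem_prod hθ₀ hπ₀)
      rw [hzero, sub_zero] at hdev2
      have herr' : errπ n ω ≤ c/4 := by
        rw [Real.dist_0_eq_abs] at hB
        exact (le_abs_self _).trans hB
      have hinf : sInf ((fun π => ‖Ψ0 n ω θ₀ π‖) '' Pi) ≤ ‖Ψ0 n ω θ₀ π₀‖ :=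
        csInf_le ⟨0, by rintro _ ⟨x, _, rfl⟩; exact norm_nonneg _⟩ (Set.mem_image_of_mem _ hπ₀)
      have hΨ0hat : ‖Ψ0 n ω θ₀ (πhat n ω)‖ ≤ 2*(c/4) := by
        have := hπnear n ω
        linarith
      have hlim : ‖Ψlim θ₀ (πhat n ω)‖ ≤ c/4 + 2*(c/4) := by
        have htri := norm_le_norm_add_norm_sub (Ψ0 n ω θ₀ (πhat n ω)) (Ψlim θ₀ (πhat n ω))
        linarith
      have hge := hcmin (πhat n ω) (hπmem n ω) hω
      linarith
    calc P {ω | ε' ≤ dist (πhat n ω) π₀}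
        ≤ P ({ω | ∃ x ∈ K, c/4 < ‖Ψ0 n ω x.1 x.2 - Ψlim x.1 x.2‖}
            ∪ {ω | c/4 < dist (errπ n ω) 0}) := measure_mono hsub
      _ ≤ P {ω | ∃ x ∈ K, c/4 < ‖Ψ0 n ω x.1 x.2 - Ψlim x.1 x.2‖}
            + P {ω | c/4 < dist (errπ n ω) 0} := measure_union_le _ _
      _ ≤ ENNReal.ofReal (η/2) + ENNReal.ofReal (η/2) := add_le_add hUn hEn
      _ = ENNReal.ofReal η := by
          rw [← ENNReal.ofReal_add (by positivity) (by positivity)]; norm_num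
  -- consistency of θhat
  have hcontθ : ContinuousOn (fun θ => Ψlim θ π₀) Θ :=
    SwizsAux.continuousOn_of_lip Mb (fun x hx y hy => by
      rw [dist_eq_norm]; exact hΨθ x hx y hy π₀ hπ₀)
  have hidθ : ∀ θ ∈ Θ, Ψlim θ π₀ = 0 → θ = θ₀ := fun θ hθ h =>
    (hinjθ π₀ hπ₀ θ hθ θ₀ hθ₀).mp (by rw [h, hzero])
  intro ε hε
  apply SwizsAux.tendsto_zero_of_forall_ofReal
  intro η hη
  obtain ⟨c, hc, hcmin⟩ :=
    SwizsAux.exists_pos_lowerBound Θ hΘ (fun θ => Ψlim θ π₀) hcontθ θ₀ hidθ hε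
  set δ₁ := c / (8 * (Ma + 1)) with hδ₁def
  have hδ₁ : 0 < δ₁ := by positivity
  have h1 := hπcons δ₁ hδ₁ (η/3) (by positivity)
  have h2 := hunifs (c/8) (by positivity) (η/3) (by positivity)
  have h3 : ∀ᶠ n in atTop, P {ω | c/8 < dist (errθ n ω) 0} ≤ ENNReal.ofReal (η/3) :=
    ((herrθ (c/8) (by positivity)).eventually_lt_const
      (ENNReal.ofReal_pos.mpr (by positivity))).mono fun n h => h.le
  filter_upwards [h1, h2, h3] with n h1n h2n h3n
  have hsub : {ω | ε < dist (θhat n ω) θ₀} ⊆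
      {ω | δ₁ ≤ dist (πhat n ω) π₀}
        ∪ {ω | ∃ x ∈ K, c/8 < ‖Ψs n ω x.1 x.2 - Ψlim x.1 x.2‖}
        ∪ {ω | c/8 < dist (errθ n ω) 0} := by
    intro ω hω
    simp only [Set.mem_setOf_eq] at hω
    by_cases hS1 : ω ∈ {ω | δ₁ ≤ dist (πhat n ω) π₀}
    · exact Or.inl (Or.inl hS1)
    by_cases hS2 : ω ∈ {ω | ∃ x ∈ K, c/8 < ‖Ψs n ω x.1 x.2 - Ψlim x.1 x.2‖}
    · exact Or.inl (Or.inr hS2)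
    by_cases hS3 : ω ∈ {ω | c/8 < dist (errθ n ω) 0}
    · exact Or.inr hS3
    exfalso
    simp only [Set.mem_setOf_eq] at hS1 hS2 hS3
    push_neg at hS1 hS2 hS3
    -- distance of πhat to π₀
    have hπd : ‖πhat n ω - π₀‖ < δ₁ := by rw [← dist_eq_norm]; exact hS1
    have hMaδ : Ma * δ₁ ≤ c/8 := by
      rw [hδ₁def, mul_div_assoc']
      rw [div_le_div_iff₀ (by positivity) (by norm_num : (0:ℝ) < 8)]
      nlinarith
    -- errθ bound
    have herr' : errθ n ω ≤ c/8 := by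
      rw [Real.dist_0_eq_abs] at hS3
      exact (le_abs_self _).trans hS3
    -- deviation bounds at the needed points
    have hx1 : ((θ₀, πhat n ω) : EuclideanSpace ℝ (Fin p) × EuclideanSpace ℝ (Fin p)) ∈ K :=
      Set.mk_mem_prod hθ₀ (hπmem n ω)
    have hx2 : ((θhat n ω, πhat n ω) :
        EuclideanSpace ℝ (Fin p) × EuclideanSpace ℝ (Fin p)) ∈ K :=
      Set.mk_mem_prod (hθmem n ω) (hπmem n ω)
    have hdev1 : ‖Ψs n ω θ₀ (πhat n ω) - Ψlim θ₀ (πhat n ω)‖ ≤ c/8 := hS2 (θ₀, πhat n ω) hx1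
    have hdev2 : ‖Ψs n ω (θhat n ω) (πhat n ω) - Ψlim (θhat n ω) (πhat n ω)‖ ≤ c/8 :=
      hS2 (θhat n ω, πhat n ω) hx2
    -- ‖Ψlim θ₀ πhat‖ ≤ c/8
    have hlim0 : ‖Ψlim θ₀ (πhat n ω)‖ ≤ c/8 := by
      have h := hΨπ θ₀ hθ₀ (πhat n ω) (hπmem n ω) π₀ hπ₀
      rw [hzero, sub_zero] at h
      refine h.trans ?_
      refine le_trans (mul_le_mul_of_nonneg_left hπd.le hMa.le) hMaδ
    -- ‖Ψs θ₀ πhat‖ ≤ c/4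
    have hΨsθ₀ : ‖Ψs n ω θ₀ (πhat n ω)‖ ≤ c/8 + c/8 := by
      have htri := norm_le_norm_add_norm_sub (Ψlim θ₀ (πhat n ω)) (Ψs n ω θ₀ (πhat n ω))
      have : ‖Ψlim θ₀ (πhat n ω) - Ψs n ω θ₀ (πhat n ω)‖
          = ‖Ψs n ω θ₀ (πhat n ω) - Ψlim θ₀ (πhat n ω)‖ := norm_sub_rev _ _
      linarith
    have hinf : sInf ((fun θ => ‖Ψs n ω θ (πhat n ω)‖) '' Θ) ≤ ‖Ψs n ω θ₀ (πhat n ω)‖ :=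
      csInf_le ⟨0, by rintro _ ⟨x, _, rfl⟩; exact norm_nonneg _⟩ (Set.mem_image_of_mem _ hθ₀)
    have hΨshat : ‖Ψs n ω (θhat n ω) (πhat n ω)‖ ≤ 3*(c/8) := by
      have := hθnear n ω
      linarith
    have hlimhat : ‖Ψlim (θhat n ω) (πhat n ω)‖ ≤ 4*(c/8) := by
      have htri := norm_le_norm_add_norm_sub (Ψs n ω (θhat n ω) (πhat n ω))
        (Ψlim (θhat n ω) (πhat n ω))
      linarith
    have hlimθπ₀ : ‖Ψlim (θhat n ω) π₀‖ ≤ 5*(c/8) := by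
      have h := hΨπ (θhat n ω) (hθmem n ω) π₀ hπ₀ (πhat n ω) (hπmem n ω)
      have hd : ‖π₀ - πhat n ω‖ < δ₁ := by
        rw [← dist_eq_norm, dist_comm]; exact hS1
      have hbd : ‖Ψlim (θhat n ω) π₀ - Ψlim (θhat n ω) (πhat n ω)‖ ≤ c/8 :=
        h.trans (le_trans (mul_le_mul_of_nonneg_left hd.le hMa.le) hMaδ)
      have htri := norm_le_norm_add_norm_sub (Ψlim (θhat n ω) (πhat n ω))
        (Ψlim (θhat n ω) π₀)
      have hrev : ‖Ψlim (θhat n ω) (πhat n ω) - Ψlim (θhat n ω) π₀‖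
          = ‖Ψlim (θhat n ω) π₀ - Ψlim (θhat n ω) (πhat n ω)‖ := norm_sub_rev _ _
      linarith
    have hge := hcmin (θhat n ω) (hθmem n ω) hω.le
    linarith
  calc P {ω | ε < dist (θhat n ω) θ₀}
      ≤ P ({ω | δ₁ ≤ dist (πhat n ω) π₀}
          ∪ {ω | ∃ x ∈ K, c/8 < ‖Ψs n ω x.1 x.2 - Ψlim x.1 x.2‖}
          ∪ {ω | c/8 < dist (errθ n ω) 0}) := measure_mono hsub
    _ ≤ P {ω | δ₁ ≤ dist (πhat n ω) π₀}
          + P {ω | ∃ x ∈ K, c/8 < ‖Ψs n ω x.1 x.2 - Ψlim x.1 x.2‖}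
          + P {ω | c/8 < dist (errθ n ω) 0} := by
        refine le_trans (measure_union_le _ _) ?_
        refine le_trans (add_le_add (measure_union_le _ _) le_rfl) ?_
        exact le_refl _
    _ ≤ ENNReal.ofReal (η/3) + ENNReal.ofReal (η/3) + ENNReal.ofReal (η/3) :=
        add_le_add (add_le_add h1n h2n) h3n
    _ = ENNReal.ofReal η := by
        rw [← ENNReal.ofReal_add (by positivity) (by positivity),
          ← ENNReal.ofReal_add (by positivity) (by positivity)]
        congr 1
        ring
end

section
/- Let Θ be a compact metric space and g_n : Ω × Θ → ℝ^p a sequence of random functions. If (i) for each θ ∈ Θ, g_n(θ) converges in probability to a deterministic limit g(θ), and (ii) {g_n} is stochastically uniformly equicontinuous on Θ, then: (1) g_n converges uniformly in probability, i.e. sup_{θ∈Θ} ‖g_n(θ) − g(θ)‖ → 0 in probability; and (2) the limit g is uniformly continuous on Θ. -/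
open MeasureTheory Filter Topology

/-- Stochastic uniform equicontinuity of a sequence of random functions. -/
def StochasticallyUniformlyEquicontinuous {Ω Θ E : Type*} [MeasurableSpace Ω]
    [PseudoMetricSpace Θ] [SeminormedAddCommGroup E]
    (P : Measure Ω) (g : ℕ → Ω → Θ → E) : Prop :=
  ∀ ε : ℝ, 0 < ε → ∃ δ : ℝ, 0 < δ ∧
    limsup (fun n =>
      P {ω | ∃ θ θ' : Θ, dist θ θ' < δ ∧ ε < ‖g n ω θ' - g n ω θ‖}) atTop
      < ENNReal.ofReal ε

/-!
Uniform continuity of `g` comes from a single sample point `ω` at which `g n ω` is close to `g`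
at `θ` and `θ'` and oscillates little between them; such an `ω` exists because the three bad
events have total probability below one. Pointwise convergence then upgrades to uniform
convergence through a finite `δ`-net: off an event of small probability, `g n` oscillates by at
most `ε / 3` on every `δ`-ball, at the finitely many centres it is `ε / 3`-close to `g`, and `g`
itself oscillates by less than `ε / 3`.
-/

namespace StochasticallyUniformlyEquicontinuous

variable {Ω Θ E : Type*} [MeasurableSpace Ω] [PseudoMetricSpace Θ] [SeminormedAddCommGroup E]
  {P : Measure Ω} {g : ℕ → Ω → Θ → E}

theorem exists_eventually_measure_lt (hequi : StochasticallyUniformlyEquicontinuous P g)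
    {ε : ℝ} (hε : 0 < ε) {η : ENNReal} (hη : 0 < η) :
    ∃ δ : ℝ, 0 < δ ∧ ∀ᶠ n in atTop,
      P {ω | ∃ θ θ' : Θ, dist θ θ' < δ ∧ ε < ‖g n ω θ' - g n ω θ‖} < η := by
  obtain ⟨r, -, hr_pos, hr_lt⟩ := ENNReal.lt_iff_exists_real_btwn.1 hη
  obtain ⟨δ, hδ, hlimsup⟩ := hequi (min ε r) (lt_min hε (ENNReal.ofReal_pos.1 hr_pos))
  refine ⟨δ, hδ, (eventually_lt_of_limsup_lt hlimsup).mono fun n hn => ?_⟩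
  calc P {ω | ∃ θ θ' : Θ, dist θ θ' < δ ∧ ε < ‖g n ω θ' - g n ω θ‖}
      ≤ P {ω | ∃ θ θ' : Θ, dist θ θ' < δ ∧ min ε r < ‖g n ω θ' - g n ω θ‖} :=
        measure_mono fun ω ⟨θ, θ', hθ, hlt⟩ => ⟨θ, θ', hθ, (min_le_left ε r).trans_lt hlt⟩
    _ < ENNReal.ofReal (min ε r) := hn
    _ ≤ ENNReal.ofReal r := ENNReal.ofReal_le_ofReal (min_le_right ε r)
    _ < η := hr_lt

theorem uniformContinuous_of_tendstoInProb [IsProbabilityMeasure P]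
    (hequi : StochasticallyUniformlyEquicontinuous P g) {glim : Θ → E}
    (hpt : ∀ θ : Θ, TendstoInProb P (fun n ω => g n ω θ) (glim θ)) :
    UniformContinuous glim := by
  rw [Metric.uniformContinuous_iff]
  intro ε hε
  have hε' : 0 < ε / 4 := by positivity
  have hthird : (0 : ENNReal) < 1 / 3 := by simp
  obtain ⟨δ, hδ, hosc⟩ := hequi.exists_eventually_measure_lt hε' hthird
  refine ⟨δ, hδ, fun {θ θ'} hθθ' => ?_⟩
  obtain ⟨n, ⟨hA, hB⟩, hC⟩ := (((hpt θ _ hε').eventually_lt_const hthird).and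
    ((hpt θ' _ hε').eventually_lt_const hthird) |>.and hosc).exists
  set A := {ω | ε / 4 < dist (g n ω θ) (glim θ)}
  set B := {ω | ε / 4 < dist (g n ω θ') (glim θ')}
  set C := {ω | ∃ a b : Θ, dist a b < δ ∧ ε / 4 < ‖g n ω b - g n ω a‖}
  have hbad : P (A ∪ B ∪ C) < 1 :=
    calc P (A ∪ B ∪ C) ≤ P A + P B + P C :=
          (measure_union_le _ _).trans (add_le_add_left (measure_union_le _ _) _)
      _ < 1 / 3 + 1 / 3 + 1 / 3 := by gcongr
      _ = 1 := ENNReal.add_thirds 1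
  obtain ⟨ω, hω⟩ : ∃ ω, ω ∉ A ∪ B ∪ C := by
    by_contra! hall
    simp [Set.eq_univ_of_forall hall] at hbad
  simp only [Set.mem_union, Set.mem_ofPred_eq, A, B, C, not_or, not_exists, not_and,
    not_lt] at hω
  obtain ⟨⟨hωθ, hωθ'⟩, hωosc⟩ := hω
  calc dist (glim θ) (glim θ')
      ≤ dist (glim θ) (g n ω θ) + dist (g n ω θ) (g n ω θ') + dist (g n ω θ') (glim θ') :=
        dist_triangle4 _ _ _ _
    _ ≤ ε / 4 + ε / 4 + ε / 4 := by
        gcongr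
        · rwa [dist_comm]
        · rw [dist_comm, dist_eq_norm]
          exact hωosc θ θ' hθθ'
    _ < ε := by linarith

theorem tendsto_measure_exists_lt_norm_sub [CompactSpace Θ]
    (hequi : StochasticallyUniformlyEquicontinuous P g) {glim : Θ → E}
    (hpt : ∀ θ : Θ, TendstoInProb P (fun n ω => g n ω θ) (glim θ))
    (hglim : UniformContinuous glim) {ε : ℝ} (hε : 0 < ε) :
    Tendsto (fun n => P {ω | ∃ θ : Θ, ε < ‖g n ω θ - glim θ‖}) atTop (𝓝 0) := by
  rw [ENNReal.tendsto_nhds_zero]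
  intro η hη
  have hη2 : 0 < η / 2 := ENNReal.half_pos hη.ne'
  have hε3 : 0 < ε / 3 := by positivity
  obtain ⟨δ₁, hδ₁, hosc⟩ := hequi.exists_eventually_measure_lt hε3 hη2
  obtain ⟨δ₂, hδ₂, hglimδ⟩ := Metric.uniformContinuous_iff.1 hglim _ hε3
  obtain ⟨T, hT⟩ := CompactSpace.elim_nhds_subcover (fun i : Θ => Metric.ball i (min δ₁ δ₂))
    fun i => Metric.ball_mem_nhds i (lt_min hδ₁ hδ₂)
  have hnet : ∀ᶠ n in atTop,
      ∑ i ∈ T, P {ω | ε / 3 < dist (g n ω i) (glim i)} < η / 2 := by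
    refine Tendsto.eventually_lt_const hη2 ?_
    simpa using tendsto_finsetSum T fun i _ => hpt i _ hε3
  have hincl : ∀ n, {ω | ∃ θ : Θ, ε < ‖g n ω θ - glim θ‖} ⊆
      {ω | ∃ a b : Θ, dist a b < δ₁ ∧ ε / 3 < ‖g n ω b - g n ω a‖} ∪
        ⋃ i ∈ T, {ω | ε / 3 < dist (g n ω i) (glim i)} := by
    rintro n ω ⟨θ, hθ⟩
    obtain ⟨i, hiT, hθi⟩ := Set.mem_iUnion₂.1 (hT.ge (Set.mem_univ θ))
    obtain ⟨hθi₁, hθi₂⟩ := lt_min_iff.1 (Metric.mem_ball.1 hθi)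
    by_contra hgood
    simp only [Set.mem_union, Set.mem_ofPred_eq, Set.mem_iUnion, not_or, not_exists, not_and,
      not_lt] at hgood
    have hgn : dist (g n ω θ) (g n ω i) ≤ ε / 3 := by
      rw [dist_eq_norm]; exact hgood.1 i θ (by rwa [dist_comm])
    have hgi : dist (g n ω i) (glim i) ≤ ε / 3 := hgood.2 i hiT
    have hglimi : dist (glim i) (glim θ) < ε / 3 := by rw [dist_comm]; exact hglimδ hθi₂
    have htri := dist_triangle4 (g n ω θ) (g n ω i) (glim i) (glim θ)
    rw [dist_eq_norm] at htri
    linarith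
  filter_upwards [hosc, hnet] with n hoscn hnetn
  calc P {ω | ∃ θ : Θ, ε < ‖g n ω θ - glim θ‖}
      ≤ P {ω | ∃ a b : Θ, dist a b < δ₁ ∧ ε / 3 < ‖g n ω b - g n ω a‖} +
          ∑ i ∈ T, P {ω | ε / 3 < dist (g n ω i) (glim i)} :=
        (measure_mono (hincl n)).trans
          ((measure_union_le _ _).trans (add_le_add_right (measure_biUnion_finset_le _ _) _))
    _ ≤ η / 2 + η / 2 := add_le_add hoscn.le hnetn.le
    _ = η := ENNReal.add_halves η

end StochasticallyUniformlyEquicontinuous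

theorem uniform_consistency
    {Ω Θ : Type*} [MeasurableSpace Ω] [MetricSpace Θ] [CompactSpace Θ] {p : ℕ}
    (P : Measure Ω) [IsProbabilityMeasure P]
    (g : ℕ → Ω → Θ → EuclideanSpace ℝ (Fin p))
    (glim : Θ → EuclideanSpace ℝ (Fin p))
    (hpt : ∀ θ : Θ, TendstoInProb P (fun n ω => g n ω θ) (glim θ))
    (hequi : StochasticallyUniformlyEquicontinuous P g) :
    (∀ ε : ℝ, 0 < ε →
      Tendsto (fun n => P {ω | ∃ θ : Θ, ε < ‖g n ω θ - glim θ‖}) atTop (nhds 0)) ∧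
      UniformContinuous glim := by
  have hglim := hequi.uniformContinuous_of_tendstoInProb hpt
  exact ⟨fun ε hε => hequi.tendsto_measure_exists_lt_norm_sub hpt hglim hε, hglim⟩
end

section
/- Let (x_i)_{i≥1} be an i.i.d. sequence of random variables, Θ a compact metric space, and g_n(θ) = n^{-1} ∑_{i=1}^n g(x_i, θ) with ‖g(x_i, θ) − g(x_i, θ')‖ ≤ b(x_i) · d(θ, θ') for an envelope b with finite expectation. If in addition g_n(θ) converges in probability to a deterministic limit ḡ(θ) for each θ ∈ Θ, then the convergence is uniform: sup_{θ∈Θ} ‖g_n(θ) − ḡ(θ)‖ → 0 in probability (a uniform weak law of large numbers). -/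
open MeasureTheory ProbabilityTheory Filter Topology

open Finset

section NullEvents

variable {Ω : Type*} [MeasurableSpace Ω] {P : Measure Ω}

lemma tendsto_measure_zero_of_subset {s t : ℕ → Set Ω}
    (hs : Tendsto (fun n => P (s n)) atTop (𝓝 0)) (hts : ∀ n, t n ⊆ s n) :
    Tendsto (fun n => P (t n)) atTop (𝓝 0) :=
  tendsto_of_tendsto_of_tendsto_of_le_of_le tendsto_const_nhds hs (fun _ => zero_le)
    fun n => measure_mono (hts n)

lemma tendsto_measure_union_zero {s t : ℕ → Set Ω}
    (hs : Tendsto (fun n => P (s n)) atTop (𝓝 0)) (ht : Tendsto (fun n => P (t n)) atTop (𝓝 0)) :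
    Tendsto (fun n => P (s n ∪ t n)) atTop (𝓝 0) := by
  have hsum := hs.add ht
  rw [add_zero] at hsum
  exact tendsto_of_tendsto_of_tendsto_of_le_of_le tendsto_const_nhds hsum (fun _ => zero_le)
    fun n => measure_union_le _ _

lemma tendsto_measure_biUnion_finset_zero {ι : Type*} (T : Finset ι) {s : ι → ℕ → Set Ω}
    (hs : ∀ k ∈ T, Tendsto (fun n => P (s k n)) atTop (𝓝 0)) :
    Tendsto (fun n => P (⋃ k ∈ T, s k n)) atTop (𝓝 0) := by
  have hsum := tendsto_finsetSum T hs
  rw [sum_const_zero] at hsum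
  exact tendsto_of_tendsto_of_tendsto_of_le_of_le tendsto_const_nhds hsum (fun _ => zero_le)
    fun n => measure_biUnion_finset_le T _

lemma exists_notMem_of_tendsto_measure_zero [NeZero P] {s : ℕ → Set Ω}
    (hs : Tendsto (fun n => P (s n)) atTop (𝓝 0)) : ∃ n ω, ω ∉ s n := by
  obtain ⟨n, hn⟩ := (hs.eventually_lt_const (Measure.measure_univ_pos.2 (NeZero.ne P))).exists
  refine ⟨n, (Set.ne_univ_iff_exists_notMem _).1 fun h => ?_⟩
  rw [h] at hn
  exact lt_irrefl _ hn

end NullEvents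

lemma TendstoInMeasure.tendstoInProb {Ω E : Type*} [MeasurableSpace Ω] [PseudoMetricSpace E]
    {P : Measure Ω} {X : ℕ → Ω → E} {c : E} (h : TendstoInMeasure P X atTop fun _ => c) :
    TendstoInProb P X c := fun ε hε =>
  tendsto_measure_zero_of_subset (tendstoInMeasure_iff_dist.1 h ε hε) fun _ =>
    Set.ofPred_subset_ofPred.2 fun _ => le_of_lt

theorem tendstoInProb_average_of_identDistrib {Ω : Type*} [MeasurableSpace Ω] {P : Measure Ω}
    [IsFiniteMeasure P] (Y : ℕ → Ω → ℝ) (hint : Integrable (Y 0) P)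
    (hindep : Pairwise fun i j => Y i ⟂ᵢ[P] Y j) (hident : ∀ i, IdentDistrib (Y i) (Y 0) P P) :
    TendstoInProb P (fun n ω => (n : ℝ)⁻¹ * ∑ i ∈ range n, Y i ω) P[Y 0] := by
  refine TendstoInMeasure.tendstoInProb
    (tendstoInMeasure_of_tendsto_ae (fun n => ?_) (strong_law_ae Y hint hindep hident))
  exact ((Finset.aemeasurable_fun_sum _ fun i _ => (hident i).aemeasurable_fst).const_mul
    _).aestronglyMeasurable

section RandomLipschitz

variable {Ω Θ E : Type*} [MeasurableSpace Ω] [PseudoMetricSpace Θ] [PseudoMetricSpace E]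
  {P : Measure Ω} {G : ℕ → Θ → Ω → E} {L : ℕ → Ω → ℝ} {μ : ℝ} {gbar : Θ → E}

lemma dist_le_of_tendstoInProb_of_randomLipschitz [NeZero P]
    (hG_lip : ∀ n ω θ θ', dist (G n θ ω) (G n θ' ω) ≤ L n ω * dist θ θ')
    (hL : TendstoInProb P L μ) (hG : ∀ θ, TendstoInProb P (fun n => G n θ) (gbar θ))
    (θ θ' : Θ) : dist (gbar θ) (gbar θ') ≤ μ * dist θ θ' := by
  refine le_of_forall_pos_le_add fun ε hε => ?_
  set d := dist θ θ'
  set c := ε / (2 + d)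
  have hd : 0 < 2 + d := by positivity
  have hc : 0 < c := by positivity
  obtain ⟨n, ω, hω⟩ := exists_notMem_of_tendsto_measure_zero
    (tendsto_measure_union_zero (tendsto_measure_union_zero (hG θ c hc) (hG θ' c hc)) (hL c hc))
  simp only [Set.mem_union, Set.mem_ofPred_eq, not_or, not_lt] at hω
  obtain ⟨⟨hθ, hθ'⟩, hLn⟩ := hω
  have hLn_le : L n ω ≤ μ + c := by
    rw [Real.dist_eq] at hLn
    linarith [le_abs_self (L n ω - μ)]
  calc dist (gbar θ) (gbar θ')
      ≤ dist (gbar θ) (G n θ ω) + dist (G n θ ω) (G n θ' ω) + dist (G n θ' ω) (gbar θ') :=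
        dist_triangle4 _ _ _ _
    _ ≤ c + (μ + c) * d + c := by
        rw [dist_comm] at hθ
        gcongr
        exact (hG_lip n ω θ θ').trans (mul_le_mul_of_nonneg_right hLn_le dist_nonneg)
    _ = μ * d + ε := by
        simp only [c]
        field_simp
        ring

theorem tendstoInProb_uniform_of_randomLipschitz [CompactSpace Θ] [NeZero P] (hμ : 0 ≤ μ)
    (hG_lip : ∀ n ω θ θ', dist (G n θ ω) (G n θ' ω) ≤ L n ω * dist θ θ')
    (hL : TendstoInProb P L μ) (hG : ∀ θ, TendstoInProb P (fun n => G n θ) (gbar θ))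
    (ε : ℝ) (hε : 0 < ε) :
    Tendsto (fun n => P {ω | ∃ θ, ε < dist (G n θ ω) (gbar θ)}) atTop (𝓝 0) := by
  set δ := ε / (2 * (2 * μ + 1))
  have hδ : 0 < δ := by positivity
  obtain ⟨T, -, hT⟩ :=
    isCompact_univ.elim_nhds_subcover (fun θ : Θ => Metric.ball θ δ)
      fun θ _ => Metric.ball_mem_nhds θ hδ
  refine tendsto_measure_zero_of_subset (tendsto_measure_union_zero (hL 1 one_pos)
    (tendsto_measure_biUnion_finset_zero T fun k _ => hG k (ε / 2) (half_pos hε)))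
    fun n ω ⟨θ, hθ⟩ => ?_
  by_contra hω
  simp only [Set.mem_union, Set.mem_iUnion, Set.mem_ofPred_eq, not_or, not_lt, not_exists] at hω
  obtain ⟨hLn, hnet⟩ := hω
  obtain ⟨k, hkT, hθ_ball⟩ := Set.mem_iUnion₂.1 (hT (Set.mem_univ θ))
  have hθk : dist θ k ≤ δ := (Metric.mem_ball.1 hθ_ball).le
  have hLn_le : L n ω ≤ μ + 1 := by
    rw [Real.dist_eq] at hLn
    linarith [le_abs_self (L n ω - μ)]
  have hθG : dist (G n θ ω) (G n k ω) ≤ (μ + 1) * δ :=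
    (hG_lip n ω θ k).trans (mul_le_mul hLn_le hθk dist_nonneg (by linarith))
  have hlim : dist (gbar k) (gbar θ) ≤ μ * δ :=
    (dist_le_of_tendstoInProb_of_randomLipschitz hG_lip hL hG k θ).trans
      (mul_le_mul_of_nonneg_left (dist_comm k θ ▸ hθk) hμ)
  have hδ_eq : (μ + 1) * δ + μ * δ = ε / 2 := by
    simp only [δ]
    field_simp
    ring
  refine (?_ : dist (G n θ ω) (gbar θ) ≤ ε).not_gt hθ
  calc dist (G n θ ω) (gbar θ)
      ≤ dist (G n θ ω) (G n k ω) + dist (G n k ω) (gbar k) + dist (gbar k) (gbar θ) :=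
        dist_triangle4 _ _ _ _
    _ ≤ (μ + 1) * δ + ε / 2 + μ * δ := by gcongr; exact hnet k hkT
    _ = ε := by linarith

end RandomLipschitz

lemma dist_smul_sum_le {ι E : Type*} [SeminormedAddCommGroup E] [NormedSpace ℝ E]
    (s : Finset ι) {c : ℝ} (hc : 0 ≤ c) {u v : ι → E} {d : ι → ℝ}
    (h : ∀ i ∈ s, dist (u i) (v i) ≤ d i) :
    dist (c • ∑ i ∈ s, u i) (c • ∑ i ∈ s, v i) ≤ c * ∑ i ∈ s, d i := by
  rw [dist_smul₀, Real.norm_of_nonneg hc]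
  exact mul_le_mul_of_nonneg_left (dist_sum_sum_le_of_le s h) hc

theorem uniform_weak_law_of_large_numbers
    {Ω X Θ : Type*} [MeasurableSpace Ω] [MeasurableSpace X]
    [MetricSpace Θ] [CompactSpace Θ] {p : ℕ}
    (P : Measure Ω) [IsProbabilityMeasure P]
    (x : ℕ → Ω → X) (hmeas : ∀ i, Measurable (x i))
    (hindep : iIndepFun x P)
    (ν : Measure X) (hident : ∀ i, P.map (x i) = ν)
    (g : X → Θ → EuclideanSpace ℝ (Fin p))
    (b : X → ℝ) (hb0 : ∀ ξ, 0 ≤ b ξ) (hbmeas : Measurable b)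
    (hLip : ∀ ξ : X, ∀ θ θ' : Θ, ‖g ξ θ - g ξ θ'‖ ≤ b ξ * dist θ θ')
    (μ : ℝ) (hint : ∀ i, Integrable (fun ω => b (x i ω)) P)
    (hμ : ∀ i, ∫ ω, b (x i ω) ∂P = μ)
    (gbar : Θ → EuclideanSpace ℝ (Fin p))
    (hpt : ∀ θ : Θ, TendstoInProb P
      (fun n ω => (n : ℝ)⁻¹ • ∑ i ∈ Finset.range n, g (x i ω) θ) (gbar θ)) :
    ∀ ε : ℝ, 0 < ε →
      Tendsto (fun n : ℕ =>
        P {ω | ∃ θ : Θ,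
          ε < ‖((n : ℝ)⁻¹ • ∑ i ∈ Finset.range n, g (x i ω) θ) - gbar θ‖})
        atTop (nhds 0) := by
  have hB : TendstoInProb P (fun n ω => (n : ℝ)⁻¹ * ∑ i ∈ range n, b (x i ω)) μ := by
    rw [← hμ 0]
    refine tendstoInProb_average_of_identDistrib _ (hint 0)
      (fun i j hij => (hindep.indepFun hij).comp hbmeas hbmeas) fun i => ?_
    exact IdentDistrib.comp ⟨(hmeas i).aemeasurable, (hmeas 0).aemeasurable,
      by rw [hident i, hident 0]⟩ hbmeas
  have hμ0 : 0 ≤ μ := hμ 0 ▸ integral_nonneg fun ω => hb0 _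
  have hG_lip : ∀ (n : ℕ) ω (θ θ' : Θ),
      dist ((n : ℝ)⁻¹ • ∑ i ∈ range n, g (x i ω) θ) ((n : ℝ)⁻¹ • ∑ i ∈ range n, g (x i ω) θ')
        ≤ ((n : ℝ)⁻¹ * ∑ i ∈ range n, b (x i ω)) * dist θ θ' := by
    intro n ω θ θ'
    rw [mul_assoc, sum_mul]
    exact dist_smul_sum_le _ (by positivity) fun i _ => (dist_eq_norm _ _).trans_le (hLip _ _ _)
  intro ε hε
  simpa only [dist_eq_norm] using
    tendstoInProb_uniform_of_randomLipschitz hμ0 hG_lip hB hpt ε hε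
end

section
/- Let n ≥ 1, θ₀ > 0 and w₀ ∈ (0,1), and set π̂ = θ₀ w₀. Let u_1, …, u_n be i.i.d. random variables uniform on (0,1) and w = max_{1≤i≤n} u_i. Then the law of the SwiZs estimator θ̂ := π̂ / w = θ₀ w₀ / w is the Pareto distribution with scale π̂ and shape n: it is absolutely continuous with density θ ↦ n π̂^n / θ^{n+1} on (π̂, ∞) (and density 0 elsewhere) with respect to Lebesgue measure. -/
/-!
Write `c = θ₀ w₀` and `W = max_i u_i`. Almost surely every `u_i` lies in `(0, 1)`, so `c / W > c`
and, for `x > c`, `c / W ≤ x` holds exactly when some `u_i ≥ c / x`. By independence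
`P(c / W ≤ x) = 1 - (c / x)ⁿ`, which is the distribution function of Mathlib's `paretoMeasure c n`;
the density in the statement agrees with `paretoPDF c n` off the single point `c`.
-/

open MeasureTheory ProbabilityTheory Set
open scoped ENNReal

section Pareto

variable {t r x : ℝ}

lemma paretoMeasure_Iic_of_le (hx : x ≤ t) : paretoMeasure t r (Iic x) = 0 := by
  rw [paretoMeasure, withDensity_apply _ measurableSet_Iic,
    ← setLIntegral_congr Iio_ae_eq_Iic, lintegral_paretoPDF_of_le hx]

lemma paretoMeasure_Ioi (ht : 0 < t) (hr : 0 < r) (hx : t ≤ x) :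
    paretoMeasure t r (Ioi x) = ENNReal.ofReal ((t / x) ^ r) := by
  have hx0 : 0 < x := ht.trans_le hx
  have hexp : -(r + 1) < -1 := by linarith
  rw [paretoMeasure, withDensity_apply _ measurableSet_Ioi,
    setLIntegral_congr_fun measurableSet_Ioi fun y hy => paretoPDF_of_le (hx.trans (le_of_lt hy)),
    ← ofReal_integral_eq_lintegral_ofReal
      ((integrableOn_Ioi_rpow_of_lt hexp hx0).const_mul _)
      ((ae_restrict_iff' measurableSet_Ioi).mpr (ae_of_all _ fun y (hy : x < y) => by
        positivity [hx0.trans hy])),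
    integral_const_mul, integral_Ioi_rpow_of_lt hexp hx0, Real.div_rpow ht.le hx0.le,
    show -(r + 1) + 1 = -r by ring, Real.rpow_neg hx0.le]
  congr 1
  field_simp

lemma paretoMeasure_Iic (ht : 0 < t) (hr : 0 < r) (hx : t ≤ x) :
    paretoMeasure t r (Iic x) = 1 - ENNReal.ofReal ((t / x) ^ r) := by
  have := isProbabilityMeasure_paretoMeasure ht hr
  rw [← compl_Ioi, prob_compl_eq_one_sub measurableSet_Ioi, paretoMeasure_Ioi ht hr hx]

lemma paretoPDF_natCast_ae_eq (t : ℝ) (n : ℕ) :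
    (fun θ => ENNReal.ofReal (if t < θ then n * t ^ n / θ ^ (n + 1) else 0))
      =ᵐ[volume] paretoPDF t n := by
  filter_upwards [compl_mem_ae_iff.mpr (measure_singleton t)] with θ (hθ : θ ≠ t)
  rcases hθ.lt_or_gt with hlt | hgt
  · simp [paretoPDF_of_lt hlt, hlt.not_gt]
  · rw [paretoPDF_of_le hgt.le, if_pos hgt, Real.rpow_natCast,
      show -((n : ℝ) + 1) = ((-(n + 1 : ℤ) : ℤ) : ℝ) by push_cast; ring, Real.rpow_intCast,
      zpow_neg, div_eq_mul_inv]
    norm_cast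

end Pareto

lemma le_ciSup_iff_of_finite {ι α : Type*} [Finite ι] [Nonempty ι]
    [ConditionallyCompleteLinearOrder α] {f : ι → α} {a : α} :
    a ≤ ⨆ i, f i ↔ ∃ i, a ≤ f i := by
  obtain ⟨j, hj⟩ := exists_eq_ciSup_of_finite (f := f)
  exact ⟨fun h => ⟨j, hj ▸ h⟩, fun ⟨i, hi⟩ => hi.trans (le_ciSup (Finite.bddAbove_range f) i)⟩

lemma div_iSup_le_iff {ι : Type*} [Finite ι] [Nonempty ι] {f : ι → ℝ} (hf : ∀ i, 0 < f i)
    {c x : ℝ} (hx : 0 < x) : c / ⨆ i, f i ≤ x ↔ ∃ i, c / x ≤ f i := by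
  obtain ⟨j, hj⟩ := exists_eq_ciSup_of_finite (f := f)
  rw [div_le_comm₀ (hj ▸ hf j) hx, le_ciSup_iff_of_finite]

lemma ae_mem_of_map_eq_restrict {Ω α : Type*} [MeasurableSpace Ω] [MeasurableSpace α]
    {P : Measure Ω} {μ : Measure α} {X : Ω → α} {s : Set α} (hX : AEMeasurable X P)
    (hs : MeasurableSet s) (h : P.map X = μ.restrict s) : ∀ᵐ ω ∂P, X ω ∈ s :=
  ae_of_ae_map hX (h ▸ ae_restrict_mem hs)

section UniformSample

variable {Ω ι : Type*} [MeasurableSpace Ω] {P : Measure Ω} {u : ι → Ω → ℝ}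

lemma measure_iInter_preimage_Iio_eq_pow [Fintype ι] (hmeas : ∀ i, Measurable (u i))
    (hindep : iIndepFun u P) (hunif : ∀ i, P.map (u i) = volume.restrict (Ioo (0 : ℝ) 1))
    {s : ℝ} (hs : s ≤ 1) :
    P (⋂ i, u i ⁻¹' Iio s) = ENNReal.ofReal s ^ Fintype.card ι := by
  have hmarginal (i : ι) : P (u i ⁻¹' Iio s) = ENNReal.ofReal s := by
    rw [← Measure.map_apply (hmeas i) measurableSet_Iio, hunif i,
      Measure.restrict_apply measurableSet_Iio, inter_comm, Ioo_inter_Iio, min_eq_right hs,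
      Real.volume_Ioo, sub_zero]
  rw [hindep.meas_iInter fun i => ⟨Iio s, measurableSet_Iio, rfl⟩]
  simp [hmarginal]

theorem map_div_iSup_eq_paretoMeasure [Fintype ι] [Nonempty ι] [IsProbabilityMeasure P]
    (hmeas : ∀ i, Measurable (u i)) (hindep : iIndepFun u P)
    (hunif : ∀ i, P.map (u i) = volume.restrict (Ioo (0 : ℝ) 1)) {c : ℝ} (hc : 0 < c) :
    P.map (fun ω => c / ⨆ i, u i ω) = paretoMeasure c (Fintype.card ι) := by
  have hr : (0 : ℝ) < Fintype.card ι := by exact_mod_cast Fintype.card_pos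
  have := isProbabilityMeasure_paretoMeasure hc hr
  have hX : Measurable fun ω => c / ⨆ i, u i ω := measurable_const.div (Measurable.iSup hmeas)
  have := Measure.isProbabilityMeasure_map (μ := P) hX.aemeasurable
  have hae : ∀ᵐ ω ∂P, ∀ i, u i ω ∈ Ioo (0 : ℝ) 1 := ae_all_iff.mpr fun i =>
    ae_mem_of_map_eq_restrict (hmeas i).aemeasurable measurableSet_Ioo (hunif i)
  refine Measure.ext_of_Iic _ _ fun x => ?_
  rw [Measure.map_apply hX measurableSet_Iic]
  rcases le_or_gt x c with hx | hx
  · rw [paretoMeasure_Iic_of_le hx, measure_eq_zero_iff_ae_notMem]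
    filter_upwards [hae] with ω hω (hle : c / ⨆ i, u i ω ≤ x)
    obtain ⟨i, hi⟩ := (div_iSup_le_iff (fun i => (hω i).1) hc).mp (hle.trans hx)
    rw [div_self hc.ne'] at hi
    exact (hω i).2.not_ge hi
  · have hx0 : 0 < x := hc.trans hx
    have hevent : (fun ω => c / ⨆ i, u i ω) ⁻¹' Iic x =ᵐ[P]
        ((⋂ i, u i ⁻¹' Iio (c / x))ᶜ : Set Ω) := by
      refine Filter.eventuallyEq_set.mpr ?_
      filter_upwards [hae] with ω hω
      simp only [mem_preimage, mem_Iic, mem_compl_iff, mem_iInter, mem_Iio, not_forall, not_lt]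
      exact div_iSup_le_iff (fun i => (hω i).1) hx0
    rw [measure_congr hevent, prob_compl_eq_one_sub (.iInter fun i => hmeas i measurableSet_Iio),
      measure_iInter_preimage_Iio_eq_pow hmeas hindep hunif
      ((div_le_one hx0).mpr hx.le), paretoMeasure_Iic hc hr hx.le,
      Real.rpow_natCast, ENNReal.ofReal_pow (div_pos hc hx0).le]

end UniformSample

theorem swizs_uniform_upper_bound_pareto
    {Ω : Type*} [MeasurableSpace Ω] (P : Measure Ω) [IsProbabilityMeasure P]
    (n : ℕ) (hn : 1 ≤ n)
    (θ₀ w₀ : ℝ) (hθ₀ : 0 < θ₀) (hw₀ : w₀ ∈ Set.Ioo (0 : ℝ) 1)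
    (u : Fin n → Ω → ℝ) (hmeas : ∀ i, Measurable (u i))
    (hindep : iIndepFun u P)
    (hunif : ∀ i, P.map (u i) = volume.restrict (Set.Ioo (0 : ℝ) 1)) :
    P.map (fun ω => (θ₀ * w₀) / ⨆ i, u i ω) =
      volume.withDensity (fun θ => ENNReal.ofReal
        (if θ₀ * w₀ < θ then n * (θ₀ * w₀) ^ n / θ ^ (n + 1) else 0)) := by
  have : Nonempty (Fin n) := ⟨⟨0, hn⟩⟩
  rw [withDensity_congr_ae (paretoPDF_natCast_ae_eq _ n),
    map_div_iSup_eq_paretoMeasure hmeas hindep hunif (mul_pos hθ₀ hw₀.1), Fintype.card_fin]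
  rfl
end

section
/- Let n ≥ 1, θ₀ > 0, w₀ ∈ (0,1) and π̂ = θ₀ w₀, so π̂ < θ₀. Let u_1, …, u_n be i.i.d. uniform on (0,1) and w = max_i u_i. Then the parametric-bootstrap estimator θ̂_Boot := π̂ · w has an absolutely continuous law with density θ ↦ n θ^{n−1} / π̂^n on (0, π̂) (the power-function distribution) and density 0 elsewhere; in particular θ̂_Boot < π̂ < θ₀ almost surely, so P(θ̂_Boot ≥ θ₀) = 0: the support (0, π̂) of the bootstrap distribution is disjoint from the support (π̂, ∞) of the SwiZs distribution, and any interval built from the percentiles of the bootstrap distribution never contains θ₀ (zero coverage). -/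
open MeasureTheory ProbabilityTheory

/-!
The event `{c · max uᵢ ≤ t}` is the intersection of the independent events `{uᵢ ≤ t / c}`,
so the distribution function of `c · max uᵢ` is `min (t / c) 1 ^ n` clamped at `0`; integrating
the power-function density over `(0, t]` gives the same function, and distribution functions
determine laws on `ℝ`. Since every `uᵢ < 1` almost surely, `c · max uᵢ < c = θ₀ w₀ < θ₀`.
-/

lemma lintegral_Ioc_zero_ofReal_powerDensity {n : ℕ} (hn : n ≠ 0) {c : ℝ} (hc : 0 < c) (a : ℝ) :
    ∫⁻ θ in Set.Ioc 0 a, ENNReal.ofReal (n * θ ^ (n - 1) / c ^ n) =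
      ENNReal.ofReal (a / c) ^ n := by
  rcases le_or_gt a 0 with ha | ha
  · simp [Set.Ioc_eq_empty_of_le ha, hn,
      ENNReal.ofReal_of_nonpos (div_nonpos_of_nonpos_of_nonneg ha hc.le)]
  obtain ⟨m, rfl⟩ := Nat.exists_eq_succ_of_ne_zero hn
  have hnonneg : 0 ≤ᵐ[volume.restrict (Set.Ioc 0 a)]
      fun θ : ℝ => ((m + 1 : ℕ) : ℝ) * θ ^ (m + 1 - 1) / c ^ (m + 1) :=
    ae_restrict_of_forall_mem measurableSet_Ioc fun θ hθ => by have := hθ.1; positivity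
  rw [← ofReal_integral_eq_lintegral_ofReal (by fun_prop : Continuous _).integrableOn_Ioc hnonneg,
    ← ENNReal.ofReal_pow (div_pos ha hc).le, ← intervalIntegral.integral_of_le ha.le,
    intervalIntegral.integral_div, intervalIntegral.integral_const_mul, Nat.add_sub_cancel,
    integral_pow]
  congr 1
  rw [zero_pow m.succ_ne_zero, sub_zero, div_pow]
  push_cast
  field_simp

lemma withDensity_powerDensity_Iic {n : ℕ} (hn : n ≠ 0) {c : ℝ} (hc : 0 < c) (t : ℝ) :
    volume.withDensity (fun θ => ENNReal.ofReal
        (if 0 < θ ∧ θ < c then n * θ ^ (n - 1) / c ^ n else 0)) (Set.Iic t) =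
      ENNReal.ofReal (min (t / c) 1) ^ n := by
  have hindicator : (fun θ => ENNReal.ofReal
      (if 0 < θ ∧ θ < c then n * θ ^ (n - 1) / c ^ n else 0)) =
      (Set.Ioo 0 c).indicator fun θ => ENNReal.ofReal (n * θ ^ (n - 1) / c ^ n) := by
    ext θ
    simp only [Set.indicator_apply, Set.mem_Ioo]
    split_ifs <;> simp
  rw [withDensity_apply _ measurableSet_Iic, hindicator, lintegral_indicator measurableSet_Ioo,
    Measure.restrict_restrict measurableSet_Ioo,
    Measure.restrict_congr_set ((Ioo_ae_eq_Ioc (μ := volume)).inter (ae_eq_refl (Set.Iic t))),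
    Set.Ioc_inter_Iic,
    lintegral_Ioc_zero_ofReal_powerDensity hn hc, ← min_div_div_right hc.le, div_self hc.ne',
    min_comm]

lemma volume_restrict_Ioo_zero_one_Iic (s : ℝ) :
    volume.restrict (Set.Ioo 0 1) (Set.Iic s) = ENNReal.ofReal (min s 1) := by
  rw [Measure.restrict_apply measurableSet_Iic, Set.inter_comm,
    measure_congr ((Ioo_ae_eq_Ioc (μ := volume)).inter (ae_eq_refl (Set.Iic s))),
    Set.Ioc_inter_Iic, Real.volume_Ioc, sub_zero, min_comm]

section Maximum

variable {ι Ω : Type*} [Fintype ι] [Nonempty ι] [MeasurableSpace Ω] {P : Measure Ω}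
  {u : ι → Ω → ℝ}

lemma ProbabilityTheory.iIndepFun.measure_ciSup_le (hindep : iIndepFun u P) (s : ℝ) :
    P {ω | ⨆ i, u i ω ≤ s} = ∏ i, P (u i ⁻¹' Set.Iic s) := by
  have hpreimage : {ω | ⨆ i, u i ω ≤ s} = ⋂ i, u i ⁻¹' Set.Iic s := by
    ext ω
    simpa using ciSup_le_iff (Set.finite_range fun i => u i ω).bddAbove
  rw [hpreimage, hindep.meas_iInter fun i => ⟨Set.Iic s, measurableSet_Iic, rfl⟩]

lemma map_const_mul_ciSup_of_uniform [IsFiniteMeasure P] (hmeas : ∀ i, Measurable (u i))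
    (hindep : iIndepFun u P)
    (hunif : ∀ i, P.map (u i) = volume.restrict (Set.Ioo (0 : ℝ) 1)) {c : ℝ} (hc : 0 < c) :
    P.map (fun ω => c * ⨆ i, u i ω) =
      volume.withDensity (fun θ => ENNReal.ofReal
        (if 0 < θ ∧ θ < c then Fintype.card ι * θ ^ (Fintype.card ι - 1) / c ^ Fintype.card ι
          else 0)) := by
  have hmeas_max : Measurable fun ω => c * ⨆ i, u i ω := (Measurable.iSup hmeas).const_mul c
  refine Measure.ext_of_Iic _ _ fun t => ?_
  have hscale : (fun ω => c * ⨆ i, u i ω) ⁻¹' Set.Iic t = {ω | ⨆ i, u i ω ≤ t / c} := by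
    ext ω
    simp [le_div_iff₀' hc]
  rw [withDensity_powerDensity_Iic Fintype.card_ne_zero hc, Measure.map_apply hmeas_max
    measurableSet_Iic, hscale, hindep.measure_ciSup_le]
  simp_rw [← Measure.map_apply (hmeas _) measurableSet_Iic, hunif,
    volume_restrict_Ioo_zero_one_Iic, Finset.prod_const, Finset.card_univ]

lemma ae_ciSup_lt_one_of_uniform (hmeas : ∀ i, Measurable (u i))
    (hunif : ∀ i, P.map (u i) = volume.restrict (Set.Ioo (0 : ℝ) 1)) :
    ∀ᵐ ω ∂P, ⨆ i, u i ω < 1 := by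
  have hlt : ∀ᵐ ω ∂P, ∀ i, u i ω < 1 := ae_all_iff.2 fun i =>
    ae_of_ae_map (hmeas i).aemeasurable (p := fun x => x < 1)
      (hunif i ▸ ae_restrict_of_forall_mem measurableSet_Ioo fun _ hx => hx.2)
  filter_upwards [hlt] with ω hω
  obtain ⟨j, hj⟩ := exists_eq_ciSup_of_finite (f := fun i => u i ω)
  exact hj ▸ hω j

end Maximum

theorem bootstrap_uniform_upper_bound_power_function
    {Ω : Type*} [MeasurableSpace Ω] (P : Measure Ω) [IsProbabilityMeasure P]
    (n : ℕ) (hn : 1 ≤ n)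
    (θ₀ w₀ : ℝ) (hθ₀ : 0 < θ₀) (hw₀ : w₀ ∈ Set.Ioo (0 : ℝ) 1)
    (u : Fin n → Ω → ℝ) (hmeas : ∀ i, Measurable (u i))
    (hindep : iIndepFun u P)
    (hunif : ∀ i, P.map (u i) = volume.restrict (Set.Ioo (0 : ℝ) 1)) :
    P.map (fun ω => (θ₀ * w₀) * ⨆ i, u i ω) =
      volume.withDensity (fun θ => ENNReal.ofReal
        (if 0 < θ ∧ θ < θ₀ * w₀ then n * θ ^ (n - 1) / (θ₀ * w₀) ^ n else 0)) ∧
      (∀ᵐ ω ∂P, (θ₀ * w₀) * (⨆ i, u i ω) < θ₀ * w₀ ∧ θ₀ * w₀ < θ₀) ∧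
      P {ω | θ₀ ≤ (θ₀ * w₀) * ⨆ i, u i ω} = 0 := by
  have : Nonempty (Fin n) := Fin.pos_iff_nonempty.mp hn
  have hc : 0 < θ₀ * w₀ := mul_pos hθ₀ hw₀.1
  have hbelow : ∀ᵐ ω ∂P, (θ₀ * w₀) * (⨆ i, u i ω) < θ₀ * w₀ ∧ θ₀ * w₀ < θ₀ := by
    filter_upwards [ae_ciSup_lt_one_of_uniform hmeas hunif] with ω hω
    exact ⟨mul_lt_of_lt_one_right hc hω, mul_lt_of_lt_one_right hθ₀ hw₀.2⟩
  refine ⟨?_, hbelow, ?_⟩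
  · simpa using map_const_mul_ciSup_of_uniform hmeas hindep hunif hc
  · refine measure_mono_null ?_ (ae_iff.1 hbelow)
    intro ω hω hlt
    exact (hlt.1.trans hlt.2).not_ge hω
end
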